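/- arXiv:0809.0488 — 3 statements merged into one kernel-verified Lean document; each statement's English description precedes it below -/
import Mathlib

section
/- For every n ≥ 2, the number of full binary trees with n leaves avoiding the pattern t3 = node(node(L,L), node(L,L)) is exactly 2^(n-2). -/
inductive BTree : Type
  | leaf : BTree
  | node : BTree → BTree → BTree
  deriving DecidableEq

namespace BTree

def leaves : BTree → ℕ
  | leaf => 1
  | node l r => leaves l + leaves r

def Matches : BTree → BTree → Bool
  | _, leaf => true
  | leaf, node _ _ => false
  | node l r, node tl tr => Matches l tl && Matches r tr

def Contains : BTree → BTree → Bool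
  | leaf, t => Matches leaf t
  | node l r, t => Matches (node l r) t || Contains l t || Contains r t

def Avoids (T t : BTree) : Prop := Contains T t = false

end BTree

/-!
A tree avoids `t3` exactly when no internal node has two internal children, i.e. when it is
a leaf or a caterpillar: a spine of internal nodes, each carrying one leaf on the left or on
the right, closed off by a cherry `node leaf leaf`. A caterpillar with `k + 2` leaves is
determined by its `k` left/right choices along the spine, which gives `2 ^ k` trees.
-/

namespace BTree

def t3 : BTree := .node (.node .leaf .leaf) (.node .leaf .leaf)

def caterpillar : List Bool → BTree
  | [] => .node .leaf .leaf
  | true :: bs => .node .leaf (caterpillar bs)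
  | false :: bs => .node (caterpillar bs) .leaf

lemma caterpillar_ne_leaf (l : List Bool) : caterpillar l ≠ .leaf := by
  cases l with
  | nil => simp [caterpillar]
  | cons b bs => cases b <;> simp [caterpillar]

lemma leaves_caterpillar (l : List Bool) : (caterpillar l).leaves = l.length + 2 := by
  induction l with
  | nil => rfl
  | cons b bs ih => cases b <;> grind [caterpillar, leaves]

lemma caterpillar_injective : Function.Injective caterpillar := by
  intro l l' h
  induction l generalizing l' with
  | nil =>
    cases l' with
    | nil => rfl
    | cons b bs => cases b <;> simp [caterpillar, (caterpillar_ne_leaf bs).symm] at h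
  | cons b bs ih =>
    cases l' with
    | nil => cases b <;> simp [caterpillar, caterpillar_ne_leaf] at h
    | cons b' bs' =>
      cases b <;> cases b' <;>
        simp [caterpillar, caterpillar_ne_leaf, (caterpillar_ne_leaf _).symm] at h <;>
        simp [ih h]

lemma matches_cherry_eq_false_iff (T : BTree) :
    Matches T (.node .leaf .leaf) = false ↔ T = .leaf := by
  cases T <;> simp [Matches]

lemma avoids_t3_node_iff (a b : BTree) :
    (node a b).Avoids t3 ↔ (a = .leaf ∨ b = .leaf) ∧ a.Avoids t3 ∧ b.Avoids t3 := by
  simp only [Avoids, t3, Contains, Matches, Bool.or_eq_false_iff, Bool.and_eq_false_iff,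
    matches_cherry_eq_false_iff]
  tauto

lemma avoids_t3_caterpillar (l : List Bool) : (caterpillar l).Avoids t3 := by
  induction l with
  | nil => rfl
  | cons b bs ih => cases b <;> simp [caterpillar, avoids_t3_node_iff, ih] <;> rfl

lemma exists_caterpillar_eq {T : BTree} (hT : T ≠ .leaf) (hA : T.Avoids t3) :
    ∃ l, caterpillar l = T := by
  induction T with
  | leaf => exact absurd rfl hT
  | node a b iha ihb =>
    obtain ⟨rfl | rfl, hAa, hAb⟩ := (avoids_t3_node_iff a b).1 hA
    · by_cases hb : b = .leaf
      · exact ⟨[], by rw [hb, caterpillar]⟩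
      · obtain ⟨l, rfl⟩ := ihb hb hAb
        exact ⟨true :: l, rfl⟩
    · by_cases ha : a = .leaf
      · exact ⟨[], by rw [ha, caterpillar]⟩
      · obtain ⟨l, rfl⟩ := iha ha hAa
        exact ⟨false :: l, rfl⟩

lemma bijOn_caterpillar (k : ℕ) :
    Set.BijOn caterpillar {l | l.length = k} {T | T.leaves = k + 2 ∧ T.Avoids t3} := by
  refine ⟨fun l hl => ⟨by rw [leaves_caterpillar, hl], avoids_t3_caterpillar l⟩,
    caterpillar_injective.injOn, fun T ⟨hT, hA⟩ => ?_⟩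
  have hne : T ≠ .leaf := by rintro rfl; simp [leaves] at hT
  obtain ⟨l, rfl⟩ := exists_caterpillar_eq hne hA
  exact ⟨l, by simpa [leaves_caterpillar] using hT, rfl⟩

end BTree

theorem stmt_9 (n : ℕ) (hn : 2 ≤ n) :
    Nat.card {T : BTree //
      T.leaves = n ∧ T.Avoids (.node (.node .leaf .leaf) (.node .leaf .leaf))} =
      2 ^ (n - 2) := by
  obtain ⟨k, rfl⟩ := Nat.exists_eq_add_of_le' hn
  rw [Nat.add_sub_cancel]
  refine (Nat.card_congr (BTree.bijOn_caterpillar k).equiv).symm.trans ?_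
  change Nat.card (List.Vector Bool k) = 2 ^ k
  rw [Nat.card_eq_fintype_card, card_vector, Fintype.card_bool]
end

section
/- For every n ≥ 2, the number of full binary trees with n leaves avoiding the pattern t2 = node(L, node(node(L,L), L)) is exactly 2^(n-2). -/
/-!
A tree `node l r` avoids `t2` iff `l` avoids it and `r` is a right comb (every left child on the
right spine of `r` is a leaf). So an avoiding tree with at least two leaves is built from
`node leaf leaf` by a word of moves: lengthen the right comb at the root by one leaf, or hang the
whole tree as left child of a new root whose right child is a leaf. These words are unique, which
gives a bijection with bit strings of length `n - 2`.
-/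

namespace BTree

def t2 : BTree := node leaf (node (node leaf leaf) leaf)

theorem avoids_leaf_t2 : leaf.Avoids t2 := rfl

theorem avoids_node_t2_iff (l r : BTree) :
    (node l r).Avoids t2 ↔ l.Avoids t2 ∧ r.Avoids t2 ∧ ∀ a b c, r ≠ node (node a b) c := by
  rcases r with _ | ⟨_ | ⟨a, b⟩, c⟩ <;> simp [Avoids, Contains, Matches, t2]

def pushLeafRight : BTree → BTree
  | leaf => node leaf leaf
  | node l r => node l (node leaf r)

theorem leaves_pushLeafRight (T : BTree) : T.pushLeafRight.leaves = T.leaves + 1 := by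
  cases T <;> simp only [pushLeafRight, leaves]; omega

theorem Avoids.pushLeafRight {T : BTree} (hT : T.Avoids t2) : T.pushLeafRight.Avoids t2 := by
  cases T with
  | leaf => rfl
  | node l r =>
    obtain ⟨hl, hr, hshape⟩ := (avoids_node_t2_iff l r).1 hT
    have hr' : (node leaf r).Avoids t2 := (avoids_node_t2_iff _ _).2 ⟨avoids_leaf_t2, hr, hshape⟩
    exact (avoids_node_t2_iff _ _).2 ⟨hl, hr', by simp⟩

def ofBits : List Bool → BTree
  | [] => node leaf leaf
  | false :: bs => node (ofBits bs) leaf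
  | true :: bs => (ofBits bs).pushLeafRight

def toBits : BTree → List Bool
  | node l (node _ r) => true :: toBits (node l r)
  | node (node a b) leaf => false :: toBits (node a b)
  | _ => []

theorem leaves_ofBits (bs : List Bool) : (ofBits bs).leaves = bs.length + 2 := by
  induction bs with
  | nil => rfl
  | cons b bs ih =>
    cases b <;> simp only [ofBits, leaves, leaves_pushLeafRight, ih, List.length_cons]

theorem avoids_ofBits (bs : List Bool) : (ofBits bs).Avoids t2 := by
  induction bs with
  | nil => rfl
  | cons b bs ih =>
    cases b
    · exact (avoids_node_t2_iff _ _).2 ⟨ih, avoids_leaf_t2, by simp⟩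
    · exact ih.pushLeafRight

theorem exists_ofBits_eq_node (bs : List Bool) : ∃ l r, ofBits bs = node l r := by
  cases bs with
  | nil => exact ⟨_, _, rfl⟩
  | cons b bs =>
    cases b
    · exact ⟨_, _, rfl⟩
    · cases h : ofBits bs <;> simp [ofBits, h, pushLeafRight]

theorem toBits_ofBits (bs : List Bool) : toBits (ofBits bs) = bs := by
  induction bs with
  | nil => simp [ofBits, toBits]
  | cons b bs ih =>
    obtain ⟨l, r, h⟩ := exists_ofBits_eq_node bs
    cases b <;> simp only [ofBits, h, pushLeafRight, toBits] <;> rw [← h, ih]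

theorem ofBits_toBits :
    ∀ {l r : BTree}, (node l r).Avoids t2 → ofBits (toBits (node l r)) = node l r
  | leaf, leaf, _ => by simp [ofBits, toBits]
  | node a b, leaf, hT => by
    simp only [toBits, ofBits, ofBits_toBits ((avoids_node_t2_iff _ _).1 hT).1]
  | l, node (node a b) c, hT => absurd rfl (((avoids_node_t2_iff _ _).1 hT).2.2 a b c)
  | l, node leaf r, hT => by
    obtain ⟨hl, hr, -⟩ := (avoids_node_t2_iff _ _).1 hT
    obtain ⟨-, hr, hshape⟩ := (avoids_node_t2_iff _ _).1 hr
    simp only [toBits, ofBits, ofBits_toBits ((avoids_node_t2_iff l r).2 ⟨hl, hr, hshape⟩),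
      pushLeafRight]

theorem ofBits_toBits_of_leaves {T : BTree} (hT : T.Avoids t2) (h : 2 ≤ T.leaves) :
    ofBits (toBits T) = T := by
  cases T with
  | leaf => simp [leaves] at h
  | node l r => exact ofBits_toBits hT

def avoidingEquiv (n : ℕ) :
    List.Vector Bool n ≃ {T : BTree // T.leaves = n + 2 ∧ T.Avoids t2} where
  toFun bs := ⟨ofBits bs.1, by rw [leaves_ofBits, bs.2], avoids_ofBits bs.1⟩
  invFun T := ⟨toBits T.1, by
    have h := leaves_ofBits (toBits T.1)
    rw [ofBits_toBits_of_leaves T.2.2 (by omega), T.2.1] at h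
    omega⟩
  left_inv bs := Subtype.ext (toBits_ofBits bs.1)
  right_inv T := Subtype.ext (ofBits_toBits_of_leaves T.2.2 (by omega))

end BTree

theorem stmt_10 (n : ℕ) (hn : 2 ≤ n) :
    Nat.card {T : BTree //
      T.leaves = n ∧ T.Avoids (.node .leaf (.node (.node .leaf .leaf) .leaf))} =
      2 ^ (n - 2) := by
  obtain ⟨m, rfl⟩ := Nat.exists_eq_add_of_le' hn
  calc _ = Nat.card (List.Vector Bool m) := (Nat.card_congr (BTree.avoidingEquiv m)).symm
    _ = 2 ^ (m + 2 - 2) := by simp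
end

section
/- For every n ≥ 1, the number of full binary trees with n leaves avoiding the left comb with 4 leaves, t1 = node(node(node(L,L), L), L), equals the Motzkin number M(n-1). -/
def motzkin : ℕ → ℕ
  | 0 => 1
  | 1 => 1
  | n + 2 => motzkin (n + 1) + ∑ i : Fin (n + 1), motzkin i * motzkin (n - i)

/-!
A tree avoids the left comb `node (node (node L L) L) L` iff it is a leaf, `node leaf r`, or
`node (node leaf s) r` with `s` and `r` avoiding it. Splitting on the number of leaves of `s`, the
numbers `a n` of avoiders with `n` leaves satisfy
`a (n + 2) = a (n + 1) + ∑_{i < n} a (i + 1) * a (n - i)`, which is the Motzkin recurrence for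
`M (n + 1)` once `a (k + 1) = M k`.
-/

namespace BTree

open Finset

abbrev leftComb : BTree := node (node (node leaf leaf) leaf) leaf

lemma one_le_leaves (T : BTree) : 1 ≤ T.leaves := by
  induction T with
  | leaf => rfl
  | node l r ihl ihr => simp only [leaves]; omega

lemma leaf_avoids_leftComb : leaf.Avoids leftComb := rfl

lemma avoids_leftComb_node_leaf_iff (r : BTree) :
    (node leaf r).Avoids leftComb ↔ r.Avoids leftComb := by
  simp [Avoids, Contains, Matches]

lemma avoids_leftComb_node_node_leaf_iff (s r : BTree) :
    (node (node leaf s) r).Avoids leftComb ↔ s.Avoids leftComb ∧ r.Avoids leftComb := by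
  simp [Avoids, Contains, Matches]

lemma not_avoids_leftComb_node_node_node (a b s r : BTree) :
    ¬ (node (node (node a b) s) r).Avoids leftComb := by
  simp [Avoids, Contains, Matches]

def leftCombAvoiders : ℕ → Finset BTree
  | 0 => ∅
  | 1 => {leaf}
  | n + 2 =>
      (leftCombAvoiders (n + 1)).image (node leaf) ∪
        univ.biUnion fun i : Fin n =>
          (leftCombAvoiders (i + 1) ×ˢ leftCombAvoiders (n - i)).image
            fun p => node (node leaf p.1) p.2

lemma mem_leftCombAvoiders_add_two {n : ℕ} {T : BTree} :
    T ∈ leftCombAvoiders (n + 2) ↔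
      (∃ r ∈ leftCombAvoiders (n + 1), node leaf r = T) ∨
        ∃ (i : Fin n) (s r : BTree), s ∈ leftCombAvoiders (i + 1) ∧
          r ∈ leftCombAvoiders (n - i) ∧ node (node leaf s) r = T := by
  simp only [leftCombAvoiders, mem_union, mem_image, mem_biUnion,
    mem_univ, true_and, mem_product, Prod.exists, and_assoc]

theorem mem_leftCombAvoiders :
    ∀ {n : ℕ} {T : BTree}, T ∈ leftCombAvoiders n ↔ T.leaves = n ∧ T.Avoids leftComb
  | n, leaf => by
    rcases n with _ | _ | n <;> simp [leftCombAvoiders, leaves, leaf_avoids_leftComb]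
  | 0, node l r | 1, node l r => by
    have := one_le_leaves l
    have := one_le_leaves r
    simp [leftCombAvoiders, leaves]
    omega
  | n + 2, node leaf r => by
    have ih : r ∈ leftCombAvoiders (n + 1) ↔ _ := mem_leftCombAvoiders
    simp only [mem_leftCombAvoiders_add_two, node.injEq, reduceCtorEq, true_and, false_and,
      and_false, exists_false, or_false, exists_eq_right, ih, leaves,
      avoids_leftComb_node_leaf_iff]
    constructor <;> rintro ⟨h, hr⟩ <;> exact ⟨by omega, hr⟩
  | n + 2, node (node leaf s) r => by
    have ihs (m : ℕ) : s ∈ leftCombAvoiders m ↔ _ := mem_leftCombAvoiders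
    have ihr (m : ℕ) : r ∈ leftCombAvoiders m ↔ _ := mem_leftCombAvoiders
    simp only [mem_leftCombAvoiders_add_two, node.injEq, reduceCtorEq, true_and, false_and,
      and_false, exists_false, false_or, exists_and_left, exists_eq_right_right, ihs, ihr,
      leaves, avoids_leftComb_node_node_leaf_iff]
    have := one_le_leaves s
    have := one_le_leaves r
    constructor
    · rintro ⟨i, ⟨hs, hsa⟩, hr, hra⟩
      exact ⟨by omega, hsa, hra⟩
    · rintro ⟨hn, hsa, hra⟩
      refine ⟨⟨s.leaves - 1, by omega⟩, ⟨?_, hsa⟩, ?_, hra⟩ <;> dsimp only <;> omega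
  | n + 2, node (node (node a b) s) r => by
    simp [mem_leftCombAvoiders_add_two, not_avoids_leftComb_node_node_node]

lemma card_leftCombAvoiders_add_two (n : ℕ) :
    #(leftCombAvoiders (n + 2)) = #(leftCombAvoiders (n + 1)) +
      ∑ i : Fin n, #(leftCombAvoiders (i + 1)) * #(leftCombAvoiders (n - i)) := by
  have node_leaf_injective : Function.Injective (node leaf) := fun _ _ h => (node.inj h).2
  have graft_injective : Function.Injective fun p : BTree × BTree => node (node leaf p.1) p.2 :=
    fun p q h => by
      simp only [node.injEq, true_and] at h
      exact Prod.ext h.1 h.2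
  have pieces_disjoint : ((univ : Finset (Fin n)) : Set (Fin n)).PairwiseDisjoint fun i =>
      (leftCombAvoiders (i + 1) ×ˢ leftCombAvoiders (n - i)).image
        fun p => node (node leaf p.1) p.2 := by
    intro i _ j _ hij
    simp only [Function.onFun, disjoint_left, mem_image, mem_product, Prod.exists]
    rintro _ ⟨s, r, ⟨hs, -⟩, rfl⟩ ⟨s', r', ⟨hs', -⟩, h⟩
    simp only [node.injEq, true_and] at h
    obtain ⟨rfl, rfl⟩ := h
    rw [mem_leftCombAvoiders] at hs hs'
    exact hij (Fin.ext (by omega))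
  rw [leftCombAvoiders, card_union_of_disjoint, card_image_of_injective _ node_leaf_injective,
    card_biUnion pieces_disjoint]
  · simp only [card_image_of_injective _ graft_injective, card_product]
  · simp [disjoint_left]

lemma card_leftCombAvoiders_succ (n : ℕ) : #(leftCombAvoiders (n + 1)) = motzkin n := by
  induction n using Nat.strong_induction_on with
  | _ n ih =>
  match n with
  | 0 | 1 => simp [leftCombAvoiders, motzkin]
  | m + 2 =>
    rw [card_leftCombAvoiders_add_two, motzkin, ih (m + 1) (by omega)]
    congr 1
    refine sum_congr rfl fun i _ => ?_
    rw [show m + 1 - (i : ℕ) = m - i + 1 by omega, ih i (by omega), ih (m - i) (by omega)]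

end BTree

theorem stmt_12 (n : ℕ) (hn : 1 ≤ n) :
    Nat.card {T : BTree //
      T.leaves = n ∧ T.Avoids (.node (.node (.node .leaf .leaf) .leaf) .leaf)} =
      motzkin (n - 1) := by
  obtain ⟨m, rfl⟩ := Nat.exists_eq_add_of_le' hn
  rw [Nat.add_sub_cancel, ← BTree.card_leftCombAvoiders_succ, ← Nat.card_eq_finsetCard]
  exact Nat.card_congr (Equiv.subtypeEquivRight fun _ => BTree.mem_leftCombAvoiders.symm)
end
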